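/- If G is a connected graph with exactly one positive anti-adjacency eigenvalue, then G contains no induced subgraph isomorphic to the path P_4 on four vertices. -/

import Mathlib

/-- The eccentricity of a vertex `u` in a graph `G`: the maximum distance from `u`. -/
noncomputable def ecc {V : Type*} [Fintype V] (G : SimpleGraph V) (u : V) : ℕ :=
  Finset.univ.sup (G.dist u)

/-- The anti-adjacency (eccentricity) matrix of a graph: the `(u,v)` entry is `d_G(u,v)`
if `d_G(u,v) = min (ε_G(u)) (ε_G(v))`, and `0` otherwise. -/
noncomputable def antiAdj {V : Type*} [Fintype V] (G : SimpleGraph V) : Matrix V V ℝ :=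
  Matrix.of fun u v =>
    if G.dist u v = min (ecc G u) (ecc G v) then (G.dist u v : ℝ) else 0

/-!
A real symmetric matrix `A` with zero diagonal and at most one positive eigenvalue has no
positive entries `A p q`, `A r s` with `A q r = A q s = 0`: for a suitable `t` the vectors
`e p + e q` and `e r + e s + t • e q` would be orthogonal for the quadratic form of `A` and both
positive. Every vertex `q` has the positive entry `antiAdj G q p = ε(q)` at an eccentric vertex `p`,
and `antiAdj G` is nonnegative, so the vanishing of its entries is an equivalence relation.
Adjacent vertices of eccentricity at least 2 are related; if all vertices had eccentricity at
least 2, connectedness would relate `q` and `p`. Hence some vertex has eccentricity at most 1, and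
then all eccentricities are at most 2. In an induced path `a b c d` this forces
`ε(b) = ε(d) = 2 = d(b, d)`, so `antiAdj G b d = 2`, whereas `c` is related to both `b` and `d`.
-/

open Matrix Finset

namespace Matrix.IsHermitian

variable {n : Type*} [Fintype n] {A : Matrix n n ℝ}

lemma dotProduct_mulVec_comm (hA : A.IsHermitian) (v w : n → ℝ) :
    v ⬝ᵥ A *ᵥ w = w ⬝ᵥ A *ᵥ v := by
  rw [dotProduct_mulVec, dotProduct_comm, ← vecMul_transpose,
    ← conjTranspose_eq_transpose_of_trivial, hA]

variable [DecidableEq n] (hA : A.IsHermitian)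

lemma dotProduct_mulVec_eq_sum_eigenvalues (v w : n → ℝ) :
    v ⬝ᵥ A *ᵥ w = ∑ i, hA.eigenvalues i *
      ((star (hA.eigenvectorUnitary : Matrix n n ℝ) *ᵥ v) i *
        (star (hA.eigenvectorUnitary : Matrix n n ℝ) *ᵥ w) i) := by
  have hU : star (hA.eigenvectorUnitary : Matrix n n ℝ) =
      (hA.eigenvectorUnitary : Matrix n n ℝ)ᵀ := by
    ext; simp
  conv_lhs => rw [hA.spectral_theorem, Unitary.conjStarAlgAut_apply]
  rw [← mulVec_mulVec, ← mulVec_mulVec, dotProduct_mulVec, hU, ← mulVec_transpose]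
  simp only [dotProduct, mulVec_diagonal, Function.comp_apply, RCLike.ofReal_real_eq_id, id_eq]
  exact sum_congr rfl fun i _ => by ring

lemma dotProduct_mulVec_self_nonpos (v : n → ℝ)
    (hv : ∀ i, 0 < hA.eigenvalues i → (star (hA.eigenvectorUnitary : Matrix n n ℝ) *ᵥ v) i = 0) :
    v ⬝ᵥ A *ᵥ v ≤ 0 := by
  rw [hA.dotProduct_mulVec_eq_sum_eigenvalues]
  refine sum_nonpos fun i _ => ?_
  rcases le_or_gt (hA.eigenvalues i) 0 with hi | hi
  · exact mul_nonpos_of_nonpos_of_nonneg hi (mul_self_nonneg _)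
  · simp [hv i hi]

lemma dotProduct_mulVec_ne_zero_of_pos
    (hone : (univ.filter fun i => 0 < hA.eigenvalues i).card ≤ 1) {v w : n → ℝ}
    (hv : 0 < v ⬝ᵥ A *ᵥ v) (hw : 0 < w ⬝ᵥ A *ᵥ w) : v ⬝ᵥ A *ᵥ w ≠ 0 := by
  intro hvw
  set y := star (hA.eigenvectorUnitary : Matrix n n ℝ) *ᵥ v
  set z := star (hA.eigenvectorUnitary : Matrix n n ℝ) *ᵥ w
  obtain ⟨i₀, hi₀⟩ : ∃ i₀, ∀ i, 0 < hA.eigenvalues i → i = i₀ := by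
    rcases isEmpty_or_nonempty n with _ | _
    · exact absurd hv (not_lt.2 (hA.dotProduct_mulVec_self_nonpos v isEmptyElim))
    · obtain ⟨i₀, h⟩ := card_le_one_iff_subset_singleton.1 hone
      exact ⟨i₀, fun i hi => mem_singleton.1 (h (mem_filter.2 ⟨mem_univ _, hi⟩))⟩
  -- the combination of `v` and `w` whose only possibly positive eigencoordinate vanishes
  set u := z i₀ • v - y i₀ • w
  have hu_nonpos : u ⬝ᵥ A *ᵥ u ≤ 0 := by
    refine hA.dotProduct_mulVec_self_nonpos u fun i hi => ?_
    simp only [u, mulVec_sub, mulVec_smul, hi₀ i hi, Pi.sub_apply, Pi.smul_apply, smul_eq_mul]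
    ring
  have hu : u ⬝ᵥ A *ᵥ u = z i₀ ^ 2 * (v ⬝ᵥ A *ᵥ v) + y i₀ ^ 2 * (w ⬝ᵥ A *ᵥ w) := by
    simp only [u, mulVec_sub, mulVec_smul, sub_dotProduct, dotProduct_sub, smul_dotProduct,
      dotProduct_smul, smul_eq_mul]
    rw [hA.dotProduct_mulVec_comm w v, hvw]
    ring
  have hy_sq : y i₀ ^ 2 * (w ⬝ᵥ A *ᵥ w) ≤ 0 := by
    nlinarith [mul_nonneg (sq_nonneg (z i₀)) hv.le]
  have hy : y i₀ = 0 := pow_eq_zero_iff two_ne_zero |>.1 <|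
    le_antisymm (nonpos_of_mul_nonpos_left hy_sq hw) (sq_nonneg _)
  refine (hA.dotProduct_mulVec_self_nonpos v fun i hi => ?_).not_gt hv
  rw [hi₀ i hi]
  exact hy

lemma apply_nonpos_of_apply_eq_zero
    (hone : (univ.filter fun i => 0 < hA.eigenvalues i).card ≤ 1) (hdiag : ∀ i, A i i = 0)
    {p q r s : n} (hpq : 0 < A p q) (hqr : A q r = 0) (hqs : A q s = 0) : A r s ≤ 0 := by
  have hsymm (i j : n) : A i j = A j i := by simpa using hA.apply j i
  have hsingle (i j : n) (a b : ℝ) : Pi.single i a ⬝ᵥ A *ᵥ Pi.single j b = a * A i j * b := by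
    rw [single_dotProduct, mulVec_single, Pi.smul_apply, op_smul_eq_mul, col_apply, mul_assoc]
  by_contra! hrs
  set t := -(A p r + A p s) / A p q
  have ht : t * A p q = -(A p r + A p s) := div_mul_cancel₀ _ hpq.ne'
  refine hA.dotProduct_mulVec_ne_zero_of_pos hone (v := Pi.single p 1 + Pi.single q 1)
    (w := Pi.single r 1 + Pi.single s 1 + Pi.single q t) ?_ ?_ ?_
  · simp only [mulVec_add, dotProduct_add, add_dotProduct, hsingle, hdiag, hsymm q p]
    linarith
  · simp only [mulVec_add, dotProduct_add, add_dotProduct, hsingle, hdiag, hsymm s r, hsymm r q,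
      hsymm s q, hqr, hqs]
    linarith
  · simp only [mulVec_add, dotProduct_add, add_dotProduct, hsingle, hdiag, hqr, hqs]
    linarith

end Matrix.IsHermitian

lemma SimpleGraph.dist_eq_two_of_adj_of_adj {V : Type*} {G : SimpleGraph V} {u v w : V}
    (huw : u ≠ w) (hn : ¬G.Adj u w) (huv : G.Adj u v) (hvw : G.Adj v w) : G.dist u w = 2 := by
  rw [SimpleGraph.dist, SimpleGraph.edist_eq_two_iff.2
    ⟨huw, hn, v, (G.mem_commonNeighbors).2 ⟨huv, hvw.symm⟩⟩]
  rfl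

section AntiAdjacency

variable {V : Type*} [Fintype V] {G : SimpleGraph V}

lemma dist_le_ecc (u v : V) : G.dist u v ≤ ecc G u :=
  le_sup (mem_univ v)

lemma exists_dist_eq_ecc [Nonempty V] (u : V) : ∃ v, G.dist u v = ecc G u := by
  obtain ⟨v, -, h⟩ := exists_mem_eq_sup univ univ_nonempty (G.dist u)
  exact ⟨v, h.symm⟩

lemma ecc_le_two_of_ecc_lt_two (hG : G.Connected) {x : V} (hx : ecc G x < 2) (u : V) :
    ecc G u ≤ 2 :=
  Finset.sup_le fun v _ => calc
    G.dist u v ≤ G.dist x u + G.dist x v := G.dist_comm (u := x) ▸ hG.dist_triangle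
    _ ≤ 2 := by linarith [dist_le_ecc (G := G) x u, dist_le_ecc (G := G) x v]

lemma antiAdj_apply (u v : V) : antiAdj G u v =
    if G.dist u v = min (ecc G u) (ecc G v) then (G.dist u v : ℝ) else 0 :=
  rfl

lemma antiAdj_comm (u v : V) : antiAdj G u v = antiAdj G v u := by
  rw [antiAdj_apply, antiAdj_apply, G.dist_comm, min_comm]

lemma antiAdj_self (u : V) : antiAdj G u u = 0 := by
  simp [antiAdj_apply]

lemma antiAdj_nonneg (u v : V) : 0 ≤ antiAdj G u v := by
  rw [antiAdj_apply]
  split_ifs <;> positivity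

lemma antiAdj_of_dist_eq_ecc {u v : V} (h : G.dist u v = ecc G u) :
    antiAdj G u v = ecc G u := by
  have hle : ecc G u ≤ ecc G v := h ▸ G.dist_comm ▸ dist_le_ecc v u
  rw [antiAdj_apply, if_pos (by rw [h, min_eq_left hle]), h]

lemma antiAdj_eq_zero_of_adj {u v : V} (hu : 2 ≤ ecc G u) (hv : 2 ≤ ecc G v) (h : G.Adj u v) :
    antiAdj G u v = 0 := by
  rw [antiAdj_apply, if_neg (by rw [SimpleGraph.dist_eq_one_iff_adj.2 h]; omega)]

variable [DecidableEq V] (hH : (antiAdj G).IsHermitian)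

lemma antiAdj_eq_zero_of_antiAdj_eq_zero
    (hone : (univ.filter fun i => 0 < hH.eigenvalues i).card ≤ 1) {q r s : V} (hq : 0 < ecc G q)
    (hqr : antiAdj G q r = 0) (hqs : antiAdj G q s = 0) : antiAdj G r s = 0 := by
  have : Nonempty V := ⟨q⟩
  obtain ⟨p, hp⟩ := exists_dist_eq_ecc (G := G) q
  have hpq : 0 < antiAdj G p q := by
    rw [antiAdj_comm, antiAdj_of_dist_eq_ecc hp]
    exact_mod_cast hq
  exact (hH.apply_nonpos_of_apply_eq_zero hone antiAdj_self hpq hqr hqs).antisymm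
    (antiAdj_nonneg r s)

lemma antiAdj_eq_zero_of_walk (hone : (univ.filter fun i => 0 < hH.eigenvalues i).card ≤ 1)
    (hecc : ∀ v, 2 ≤ ecc G v) {u v : V} (p : G.Walk u v) :
    antiAdj G u v = 0 := by
  induction p with
  | nil => exact antiAdj_self _
  | @cons _ w _ h _ ih =>
    exact antiAdj_eq_zero_of_antiAdj_eq_zero hH hone (by linarith [hecc w])
      (antiAdj_eq_zero_of_adj (hecc _) (hecc _) h.symm) ih

lemma exists_ecc_lt_two (hone : (univ.filter fun i => 0 < hH.eigenvalues i).card ≤ 1)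
    (hG : G.Connected) : ∃ v, ecc G v < 2 := by
  by_contra! hecc
  obtain ⟨u⟩ := hG.nonempty
  have : Nonempty V := ⟨u⟩
  obtain ⟨v, hv⟩ := exists_dist_eq_ecc (G := G) u
  have h := antiAdj_eq_zero_of_walk hH hone hecc (hG.preconnected u v).some
  rw [antiAdj_of_dist_eq_ecc hv] at h
  have := hecc u
  norm_cast at h
  omega

end AntiAdjacency

/-- A connected graph with exactly one positive anti-adjacency eigenvalue contains no induced
path `P₄` on four vertices. -/
theorem no_induced_P4_of_one_positive_antiadjacency_eigenvalue
    {V : Type*} [Fintype V] [DecidableEq V] (G : SimpleGraph V) (hG : G.Connected)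
    (hH : (antiAdj G).IsHermitian)
    (hone : (Finset.univ.filter (fun i => 0 < hH.eigenvalues i)).card = 1) :
    ¬ ∃ a b c d : V, a ≠ b ∧ a ≠ c ∧ a ≠ d ∧ b ≠ c ∧ b ≠ d ∧ c ≠ d ∧
      G.Adj a b ∧ G.Adj b c ∧ G.Adj c d ∧ ¬ G.Adj a c ∧ ¬ G.Adj a d ∧ ¬ G.Adj b d := by
  rintro ⟨a, b, c, d, -, hac, -, -, hbd, -, hab, hbc, hcd, hnac, -, hnbd⟩
  obtain ⟨x, hx⟩ := exists_ecc_lt_two hH hone.le hG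
  have hac₂ : G.dist a c = 2 := G.dist_eq_two_of_adj_of_adj hac hnac hab hbc
  have hbd₂ : G.dist b d = 2 := G.dist_eq_two_of_adj_of_adj hbd hnbd hbc hcd
  have hb : ecc G b = 2 :=
    (ecc_le_two_of_ecc_lt_two hG hx b).antisymm (hbd₂ ▸ dist_le_ecc b d)
  have hc : 2 ≤ ecc G c := hac₂ ▸ G.dist_comm ▸ dist_le_ecc c a
  have hd : ecc G d = 2 :=
    (ecc_le_two_of_ecc_lt_two hG hx d).antisymm (hbd₂ ▸ G.dist_comm ▸ dist_le_ecc d b)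
  have hbd : antiAdj G b d = 0 := antiAdj_eq_zero_of_antiAdj_eq_zero hH hone.le (q := c)
    (by omega) (antiAdj_eq_zero_of_adj hc hb.ge hbc.symm) (antiAdj_eq_zero_of_adj hc hd.ge hcd)
  rw [antiAdj_apply, if_pos (by rw [hbd₂, hb, hd, min_self]), hbd₂] at hbd
  norm_num at hbd
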